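/- For every twice continuously differentiable function u : [0,1] → ℂ and every h ∈ L²((0,1),ℂ), one has ∫₀¹ P(u″)(x)·conj(Ph(x))dx + μ₀(u″)·conj(μ₀(h)) = (μ₀(u″) + u(1))·conj(μ₀(h)) + (u(0) − u(1))·conj(μ₁(h)) − ∫₀¹ u(x)·conj(h(x))dx. (Integration-by-parts formula in the H⁻¹(T)-type inner product.) -/

import Mathlib

open MeasureTheory intervalIntegral

/-- `𝓘g(x) = ∫₀ˣ g(y) dy` -/
noncomputable def Iprim (g : ℝ → ℂ) (x : ℝ) : ℂ := ∫ y in (0:ℝ)..x, g y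

/-- `Pg(x) = 𝓘g(x) − ∫₀¹ 𝓘g(z) dz` -/
noncomputable def Pfun (g : ℝ → ℂ) (x : ℝ) : ℂ := Iprim g x - ∫ z in (0:ℝ)..1, Iprim g z

/-- `μ₀(g) = ∫₀¹ g(x) dx` -/
noncomputable def mu0 (g : ℝ → ℂ) : ℂ := ∫ x in (0:ℝ)..1, g x

/-- `μ₁(g) = ∫₀¹ (1−x) g(x) dx` -/
noncomputable def mu1 (g : ℝ → ℂ) : ℂ := ∫ x in (0:ℝ)..1, ((1 - x : ℝ) : ℂ) * g x

/-!
Since `u''` is continuous, `P(u'') = u' - (u 1 - u 0)` on `[0,1]`, and `Ph` has mean zero, so the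
constant drops out of `∫ P(u'') conj(Ph)`. Writing `Ph = 𝓘h - μ₁(h)`, what is left is
`∫ u' conj(𝓘h)`, which is integrated by parts. As `h` is merely integrable, the integration by
parts is done by Fubini on the triangle `{y ≤ x}`; the same swap gives `∫₀¹ 𝓘g = μ₁(g)`.
-/

open Set
open scoped Interval ComplexConjugate

theorem hasDerivAt_of_hasDerivWithinAt_Icc {E : Type*} [NormedAddCommGroup E]
    [NormedSpace ℝ E] {f f' : ℝ → E} {a b : ℝ}
    (hf : ∀ x ∈ Icc a b, HasDerivWithinAt f (f' x) (Icc a b) x) :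
    ∀ x ∈ Ioo a b, HasDerivAt f (f' x) x := fun x hx =>
  (hf x (Ioo_subset_Icc_self hx)).hasDerivAt (Icc_mem_nhds hx.1 hx.2)

theorem integral_indicator_Ici {E : Type*} [NormedAddCommGroup E] [NormedSpace ℝ E]
    {f : ℝ → E} {a b y : ℝ} (hy : y ∈ Ioc a b) :
    ∫ x in a..b, (Ici y).indicator f x = ∫ x in y..b, f x := by
  rw [integral_of_le (hy.1.le.trans hy.2), integral_of_le hy.2,
    MeasureTheory.integral_indicator measurableSet_Ici,
    Measure.restrict_restrict measurableSet_Ici, ← integral_Icc_eq_integral_Ioc]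
  congr 2
  ext x
  simp only [mem_inter_iff, mem_Ici, mem_Ioc, mem_Icc]
  constructor
  · rintro ⟨hyx, -, hxb⟩; exact ⟨hyx, hxb⟩
  · rintro ⟨hyx, hxb⟩; exact ⟨hyx, hy.1.trans_le hyx, hxb⟩

section

variable {𝕜 : Type*} [RCLike 𝕜] {a b : ℝ}

theorem integral_mul_primitive {f g : ℝ → 𝕜} (hab : a ≤ b)
    (hf : IntervalIntegrable f volume a b) (hg : IntervalIntegrable g volume a b) :
    ∫ x in a..b, f x * ∫ y in a..x, g y = ∫ y in a..b, (∫ x in y..b, f x) * g y := by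
  set F : ℝ → ℝ → 𝕜 := fun x y =>
    {p : ℝ × ℝ | p.2 ≤ p.1}.indicator (fun p => f p.1 * g p.2) (x, y)
  have hF : IntegrableOn (Function.uncurry F) (Ι a b ×ˢ Ι a b) := by
    rw [IntegrableOn, Measure.volume_eq_prod, ← Measure.prod_restrict]
    exact (hf.def'.mul_prod hg.def').indicator (measurableSet_le measurable_snd measurable_fst)
  calc ∫ x in a..b, f x * ∫ y in a..x, g y
      = ∫ x in a..b, ∫ y in a..b, F x y := by
        refine integral_congr fun x hx => ?_
        rw [uIcc_of_le hab] at hx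
        rw [← intervalIntegral.integral_const_mul, ← intervalIntegral.integral_indicator hx]
        rfl
    _ = ∫ y in a..b, ∫ x in a..b, F x y := intervalIntegral_intervalIntegral_swap hF
    _ = ∫ y in a..b, (∫ x in y..b, f x) * g y := by
        refine integral_congr_ae (Filter.Eventually.of_forall fun y hy => ?_)
        rw [uIoc_of_le hab] at hy
        rw [← intervalIntegral.integral_mul_const, ← integral_indicator_Ici hy]
        rfl

theorem integral_primitive {g : ℝ → 𝕜} (hab : a ≤ b) (hg : IntervalIntegrable g volume a b) :
    ∫ x in a..b, ∫ y in a..x, g y = ∫ y in a..b, ((b - y : ℝ) : 𝕜) * g y := by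
  convert integral_mul_primitive hab intervalIntegrable_const hg (f := fun _ => (1 : 𝕜)) using 3
  · simp
  · simp [RCLike.real_smul_eq_coe_mul]

theorem integral_deriv_mul_primitive {u u' g : ℝ → 𝕜} (hab : a ≤ b)
    (hu : ContinuousOn u (Icc a b)) (hu' : ∀ x ∈ Ioo a b, HasDerivAt u (u' x) x)
    (hu'i : IntervalIntegrable u' volume a b) (hg : IntervalIntegrable g volume a b) :
    ∫ x in a..b, u' x * ∫ y in a..x, g y =
      u b * (∫ y in a..b, g y) - ∫ y in a..b, u y * g y := by
  have hftc : ∀ y ∈ Ioc a b, ∫ x in y..b, u' x = u b - u y := fun y hy =>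
    integral_eq_sub_of_hasDerivAt_of_le hy.2 (hu.mono (Icc_subset_Icc_left hy.1.le))
      (fun x hx => hu' x ⟨hy.1.trans hx.1, hx.2⟩)
      (hu'i.mono_set (by
        rw [uIcc_of_le hab, uIcc_of_le hy.2]; exact Icc_subset_Icc_left hy.1.le))
  have hug : IntervalIntegrable (fun y => u y * g y) volume a b :=
    hg.continuousOn_mul (by rwa [uIcc_of_le hab])
  rw [integral_mul_primitive hab hu'i hg, ← intervalIntegral.integral_const_mul (u b) g,
    ← intervalIntegral.integral_sub (hg.const_mul _) hug]
  refine integral_congr_ae (Filter.Eventually.of_forall fun y hy => ?_)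
  rw [uIoc_of_le hab] at hy
  rw [hftc y hy, sub_mul]

end

section

variable {g : ℝ → ℂ}

theorem continuousOn_Iprim (hg : IntervalIntegrable g volume 0 1) :
    ContinuousOn (Iprim g) (Icc 0 1) := by
  have := continuousOn_primitive_interval' hg left_mem_uIcc
  rwa [uIcc_of_le zero_le_one] at this

theorem integral_Iprim (hg : IntervalIntegrable g volume 0 1) :
    ∫ x in (0:ℝ)..1, Iprim g x = mu1 g :=
  integral_primitive zero_le_one hg

theorem Pfun_eq_Iprim_sub_mu1 (hg : IntervalIntegrable g volume 0 1) (x : ℝ) :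
    Pfun g x = Iprim g x - mu1 g := by
  rw [Pfun, integral_Iprim hg]

theorem continuousOn_Pfun (hg : IntervalIntegrable g volume 0 1) :
    ContinuousOn (Pfun g) (Icc 0 1) :=
  (continuousOn_Iprim hg).sub continuousOn_const

theorem integral_Pfun (hg : IntervalIntegrable g volume 0 1) :
    ∫ x in (0:ℝ)..1, Pfun g x = 0 := by
  simp only [Pfun]
  rw [intervalIntegral.integral_sub ((continuousOn_Iprim hg).intervalIntegrable_of_Icc
    zero_le_one) intervalIntegrable_const]
  simp

end

section

variable {u u' : ℝ → ℂ}

theorem Iprim_eq_sub_of_hasDerivAt (hu : ContinuousOn u (Icc 0 1))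
    (hu' : ∀ x ∈ Ioo 0 1, HasDerivAt u (u' x) x) (hu'i : IntervalIntegrable u' volume 0 1)
    {x : ℝ} (hx : x ∈ Icc 0 1) :
    Iprim u' x = u x - u 0 :=
  integral_eq_sub_of_hasDerivAt_of_le hx.1 (hu.mono (Icc_subset_Icc_right hx.2))
    (fun y hy => hu' y ⟨hy.1, hy.2.trans_le hx.2⟩)
    (hu'i.mono_set (by
      rw [uIcc_of_le zero_le_one, uIcc_of_le hx.1]; exact Icc_subset_Icc_right hx.2))

theorem Pfun_eq_deriv_sub_slope {u'' : ℝ → ℂ} (hu : ContinuousOn u (Icc 0 1))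
    (hu' : ∀ x ∈ Ioo 0 1, HasDerivAt u (u' x) x) (hu'c : ContinuousOn u' (Icc 0 1))
    (hu'' : ∀ x ∈ Ioo 0 1, HasDerivAt u' (u'' x) x) (hu''i : IntervalIntegrable u'' volume 0 1)
    {x : ℝ} (hx : x ∈ Icc 0 1) :
    Pfun u'' x = u' x - (u 1 - u 0) := by
  have hu'i : IntervalIntegrable u' volume 0 1 := hu'c.intervalIntegrable_of_Icc zero_le_one
  have hmean : ∫ z in (0:ℝ)..1, Iprim u'' z = (u 1 - u 0) - u' 0 := by
    rw [integral_congr fun z hz => Iprim_eq_sub_of_hasDerivAt hu'c hu'' hu''i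
        (by rwa [uIcc_of_le zero_le_one] at hz),
      intervalIntegral.integral_sub hu'i intervalIntegrable_const,
      integral_eq_sub_of_hasDerivAt_of_le zero_le_one hu hu' hu'i]
    simp
  rw [Pfun, Iprim_eq_sub_of_hasDerivAt hu'c hu'' hu''i hx, hmean]
  ring

theorem integral_deriv_mul_conj_Pfun {h : ℝ → ℂ} (hu : ContinuousOn u (Icc 0 1))
    (hu' : ∀ x ∈ Ioo 0 1, HasDerivAt u (u' x) x) (hu'c : ContinuousOn u' (Icc 0 1))
    (hh : IntervalIntegrable h volume 0 1) :
    ∫ x in (0:ℝ)..1, u' x * conj (Pfun h x) =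
      u 1 * conj (mu0 h) - conj (mu1 h) * (u 1 - u 0) - ∫ x in (0:ℝ)..1, u x * conj (h x) := by
  have hu'i : IntervalIntegrable u' volume 0 1 := hu'c.intervalIntegrable_of_Icc zero_le_one
  have hu'Ih : IntervalIntegrable (fun x => u' x * conj (Iprim h x)) volume 0 1 :=
    ContinuousOn.intervalIntegrable_of_Icc zero_le_one
      (hu'c.mul (Complex.continuous_conj.comp_continuousOn (continuousOn_Iprim hh)))
  have hconj : IntervalIntegrable (fun x => conj (h x)) volume 0 1 :=
    ⟨Complex.conjCLE.toContinuousLinearMap.integrable_comp hh.1,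
      Complex.conjCLE.toContinuousLinearMap.integrable_comp hh.2⟩
  have hibp : ∫ x in (0:ℝ)..1, u' x * conj (Iprim h x) =
      u 1 * conj (mu0 h) - ∫ x in (0:ℝ)..1, u x * conj (h x) := by
    simp only [Iprim, mu0, ← intervalIntegral_conj]
    exact integral_deriv_mul_primitive zero_le_one hu hu' hu'i hconj
  simp only [Pfun_eq_Iprim_sub_mu1 hh, map_sub, mul_sub]
  rw [intervalIntegral.integral_sub hu'Ih (hu'i.mul_const _), intervalIntegral.integral_mul_const,
    integral_eq_sub_of_hasDerivAt_of_le zero_le_one hu hu' hu'i, hibp]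
  ring

end

/-- Integration-by-parts formula in the `H⁻¹(T)`-type inner product: for twice continuously
differentiable `u : [0,1] → ℂ` and `h ∈ L²((0,1),ℂ)`,
`(u″|h)₋₁ = (μ₀(u″) + u(1)) conj(μ₀(h)) + (u(0) − u(1)) conj(μ₁(h)) − ∫₀¹ u conj(h)`. -/
theorem stmt11 (u u' u'' : ℝ → ℂ)
    (hu' : ∀ x ∈ Set.Icc (0:ℝ) 1, HasDerivWithinAt u (u' x) (Set.Icc (0:ℝ) 1) x)
    (hu'' : ∀ x ∈ Set.Icc (0:ℝ) 1, HasDerivWithinAt u' (u'' x) (Set.Icc (0:ℝ) 1) x)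
    (hcont : ContinuousOn u'' (Set.Icc (0:ℝ) 1))
    (h : ℝ → ℂ)
    (hh : MemLp h 2 (volume.restrict (Set.Ioo (0:ℝ) 1))) :
    (∫ x in (0:ℝ)..1, Pfun u'' x * (starRingEnd ℂ) (Pfun h x)) +
        mu0 u'' * (starRingEnd ℂ) (mu0 h) =
      (mu0 u'' + u 1) * (starRingEnd ℂ) (mu0 h) +
        (u 0 - u 1) * (starRingEnd ℂ) (mu1 h) -
        ∫ x in (0:ℝ)..1, u x * (starRingEnd ℂ) (h x) := by
  have huc : ContinuousOn u (Icc 0 1) := fun x hx => (hu' x hx).continuousWithinAt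
  have hud := hasDerivAt_of_hasDerivWithinAt_Icc hu'
  have hu'c : ContinuousOn u' (Icc 0 1) := fun x hx => (hu'' x hx).continuousWithinAt
  have hhi : IntervalIntegrable h volume 0 1 :=
    (intervalIntegrable_iff_integrableOn_Ioo_of_le zero_le_one).2 (hh.integrable one_le_two)
  have hPhi : IntervalIntegrable (fun x => conj (Pfun h x)) volume 0 1 :=
    ContinuousOn.intervalIntegrable_of_Icc zero_le_one
      (Complex.continuous_conj.comp_continuousOn (continuousOn_Pfun hhi))
  calc (∫ x in (0:ℝ)..1, Pfun u'' x * conj (Pfun h x)) + mu0 u'' * conj (mu0 h)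
      = (∫ x in (0:ℝ)..1, u' x * conj (Pfun h x) - (u 1 - u 0) * conj (Pfun h x))
          + mu0 u'' * conj (mu0 h) := by
        congr 1
        refine integral_congr fun x hx => ?_
        rw [uIcc_of_le zero_le_one] at hx
        rw [Pfun_eq_deriv_sub_slope huc hud hu'c (hasDerivAt_of_hasDerivWithinAt_Icc hu'')
          (hcont.intervalIntegrable_of_Icc zero_le_one) hx, sub_mul]
    _ = _ := by
      rw [intervalIntegral.integral_sub (hPhi.continuousOn_mul (by rwa [uIcc_of_le zero_le_one]))
          (hPhi.const_mul _), intervalIntegral.integral_const_mul, intervalIntegral_conj,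
        integral_Pfun hhi, integral_deriv_mul_conj_Pfun huc hud hu'c hhi,
        map_zero]
      ring
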